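/- Let b, c, x₃ be complex numbers with bc ≠ 0. The 9×9 matrix given in block form [1], [[1,0],[0,1]], [[1−bc, 0, −b²],[x₃c/b, 1, x₃],[−c/b, 0, 0]], [[1−bc, b],[c, 0]], [−bc] satisfies the braid relation, and has eigenvalue −bc with multiplicity 3 and eigenvalue 1 with multiplicity 6. -/

import Mathlib

open Matrix Polynomial

noncomputable section

/-- `R̂ ⊗ 1` acting on `V ⊗ V ⊗ V` with `V = ℂ^3`. -/
def R1 (R : Matrix (Fin 3 × Fin 3) (Fin 3 × Fin 3) ℂ) :
    Matrix (Fin 3 × Fin 3 × Fin 3) (Fin 3 × Fin 3 × Fin 3) ℂ :=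
  fun p q => R (p.1, p.2.1) (q.1, q.2.1) * (if p.2.2 = q.2.2 then 1 else 0)

/-- `1 ⊗ R̂` acting on `V ⊗ V ⊗ V` with `V = ℂ^3`. -/
def R2 (R : Matrix (Fin 3 × Fin 3) (Fin 3 × Fin 3) ℂ) :
    Matrix (Fin 3 × Fin 3 × Fin 3) (Fin 3 × Fin 3 × Fin 3) ℂ :=
  fun p q => (if p.1 = q.1 then 1 else 0) * R (p.2.1, p.2.2) (q.2.1, q.2.2)

/-- The braid relation `R̂₁R̂₂R̂₁ = R̂₂R̂₁R̂₂`. -/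
def Braid (R : Matrix (Fin 3 × Fin 3) (Fin 3 × Fin 3) ℂ) : Prop :=
  R1 R * R2 R * R1 R = R2 R * R1 R * R2 R

/-- position within the charge-1 sector: |10⟩, |01⟩. -/
def f1 (p : Fin 3 × Fin 3) : Fin 2 := if p = (1, 0) then 0 else 1

/-- position within the charge-2 sector: |20⟩, |11⟩, |02⟩. -/
def f2 (p : Fin 3 × Fin 3) : Fin 3 := if p = (2, 0) then 0 else if p = (1, 1) then 1 else 2

/-- position within the charge-3 sector: |21⟩, |12⟩. -/
def f3 (p : Fin 3 × Fin 3) : Fin 2 := if p = (2, 1) then 0 else 1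

/-- The 9×9 matrix with blocks of sizes 1,2,3,2,1 on the graded basis
|00⟩,|10⟩,|01⟩,|20⟩,|11⟩,|02⟩,|21⟩,|12⟩,|22⟩. -/
def blockR (b0 : ℂ) (B1 : Matrix (Fin 2) (Fin 2) ℂ) (B2 : Matrix (Fin 3) (Fin 3) ℂ)
    (B3 : Matrix (Fin 2) (Fin 2) ℂ) (b4 : ℂ) : Matrix (Fin 3 × Fin 3) (Fin 3 × Fin 3) ℂ :=
  fun p q =>
    if (p.1 : ℕ) + (p.2 : ℕ) ≠ (q.1 : ℕ) + (q.2 : ℕ) then 0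
    else if (p.1 : ℕ) + (p.2 : ℕ) = 0 then b0
    else if (p.1 : ℕ) + (p.2 : ℕ) = 1 then B1 (f1 p) (f1 q)
    else if (p.1 : ℕ) + (p.2 : ℕ) = 2 then B2 (f2 p) (f2 q)
    else if (p.1 : ℕ) + (p.2 : ℕ) = 3 then B3 (f3 p) (f3 q)
    else b4

/-!
`R̂` preserves the charge `i + j` of `|i j⟩`, so `R̂₁R̂₂R̂₁` and `R̂₂R̂₁R̂₂` preserve the total charge
on `V ⊗ V ⊗ V`, and the braid relation only has to be checked on the charge sectors (of dimensions
1, 3, 6, 7, 6, 3, 1); writing `c = b u` makes that check polynomial. The characteristic polynomial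
is the product of those of the blocks:
`(X - 1) · (X - 1)² · (X - 1)²(X + bc) · (X - 1)(X + bc) · (X + bc)`.
-/

namespace Matrix

variable {R : Type*} [CommRing R]

theorem charpoly_fin_one (M : Matrix (Fin 1) (Fin 1) R) : M.charpoly = X - C (M 0 0) := by
  simp [charpoly, det_unique]

theorem charpoly_fin_three (M : Matrix (Fin 3) (Fin 3) R) :
    M.charpoly = X ^ 3 - C M.trace * X ^ 2
      + C (M 0 0 * M 1 1 - M 0 1 * M 1 0 + M 0 0 * M 2 2 - M 0 2 * M 2 0
        + M 1 1 * M 2 2 - M 1 2 * M 2 1) * X - C M.det := by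
  simp [charpoly, det_fin_three, trace_fin_three]
  ring

end Matrix

def IsGradedBy {ι α R : Type*} [Zero R] (w : ι → α) (M : Matrix ι ι R) : Prop :=
  ∀ p q, w p ≠ w q → M p q = 0

theorem IsGradedBy.mul {ι α R : Type*} [Fintype ι] [NonUnitalNonAssocSemiring R] {w : ι → α}
    {M N : Matrix ι ι R} (hM : IsGradedBy w M) (hN : IsGradedBy w N) :
    IsGradedBy w (M * N) := by
  intro p q hpq
  rw [mul_apply]
  refine Finset.sum_eq_zero fun r _ => ?_
  by_cases hpr : w p = w r
  · rw [hN r q (hpr ▸ hpq), mul_zero]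
  · rw [hM p r hpr, zero_mul]

def charge (p : Fin 3 × Fin 3) : ℕ := p.1 + p.2

def charge₃ (p : Fin 3 × Fin 3 × Fin 3) : ℕ := p.1 + p.2.1 + p.2.2

section BraidRelation

variable {R : Matrix (Fin 3 × Fin 3) (Fin 3 × Fin 3) ℂ}

theorem isGradedBy_R1 (hR : IsGradedBy charge R) : IsGradedBy charge₃ (R1 R) := by
  intro p q hpq
  by_cases h : p.2.2 = q.2.2
  · have hpq' : charge (p.1, p.2.1) ≠ charge (q.1, q.2.1) := by
      simp only [charge, charge₃, h] at hpq ⊢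
      omega
    simp [R1, hR _ _ hpq']
  · simp [R1, h]

theorem isGradedBy_R2 (hR : IsGradedBy charge R) : IsGradedBy charge₃ (R2 R) := by
  intro p q hpq
  by_cases h : p.1 = q.1
  · have hpq' : charge (p.2.1, p.2.2) ≠ charge (q.2.1, q.2.2) := by
      simp only [charge, charge₃, h] at hpq ⊢
      omega
    simp [R2, hR _ _ hpq']
  · simp [R2, h]

theorem braid_of_apply_eq (hR : IsGradedBy charge R)
    (h : ∀ p q, charge₃ p = charge₃ q → (R1 R * R2 R * R1 R) p q = (R2 R * R1 R * R2 R) p q) :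
    Braid R := by
  have h1 := isGradedBy_R1 hR
  have h2 := isGradedBy_R2 hR
  ext p q
  by_cases hpq : charge₃ p = charge₃ q
  · exact h p q hpq
  · rw [((h1.mul h2).mul h1) p q hpq, ((h2.mul h1).mul h2) p q hpq]

variable (R)

theorem R1_mul_R2_mul_R1_apply (p q : Fin 3 × Fin 3 × Fin 3) :
    (R1 R * R2 R * R1 R) p q = ∑ x : Fin 3, ∑ y : Fin 3, ∑ z : Fin 3,
      R (p.1, p.2.1) (x, z) * R (z, p.2.2) (y, q.2.2) * R (x, y) (q.1, q.2.1) := by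
  simp only [mul_apply, R1, R2, Fintype.sum_prod_type, mul_ite, ite_mul, mul_one, one_mul,
    mul_zero, zero_mul, Finset.sum_ite_eq, Finset.sum_ite_eq', Finset.mem_univ, if_true,
    Finset.sum_mul, Finset.sum_ite_irrel, Finset.sum_const_zero]

theorem R2_mul_R1_mul_R2_apply (p q : Fin 3 × Fin 3 × Fin 3) :
    (R2 R * R1 R * R2 R) p q = ∑ x : Fin 3, ∑ y : Fin 3, ∑ z : Fin 3,
      R (p.2.1, p.2.2) (z, y) * R (p.1, z) (q.1, x) * R (x, y) (q.2.1, q.2.2) := by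
  simp only [mul_apply, R1, R2, Fintype.sum_prod_type, mul_ite, ite_mul, mul_one, one_mul,
    mul_zero, zero_mul, Finset.sum_ite_eq, Finset.sum_ite_eq', Finset.mem_univ, if_true,
    Finset.sum_mul, Finset.sum_ite_irrel, Finset.sum_const_zero]

end BraidRelation

section BlockR

variable (b0 : ℂ) (B1 : Matrix (Fin 2) (Fin 2) ℂ) (B2 : Matrix (Fin 3) (Fin 3) ℂ)
  (B3 : Matrix (Fin 2) (Fin 2) ℂ) (b4 : ℂ)

theorem blockR_isGradedBy : IsGradedBy charge (blockR b0 B1 B2 B3 b4) :=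
  fun _ _ h => if_pos h

def gradedEquiv : Fin 1 ⊕ Fin 2 ⊕ Fin 3 ⊕ Fin 2 ⊕ Fin 1 ≃ Fin 3 × Fin 3 where
  toFun := Sum.elim ![(0, 0)] <| Sum.elim ![(1, 0), (0, 1)] <|
    Sum.elim ![(2, 0), (1, 1), (0, 2)] <| Sum.elim ![(2, 1), (1, 2)] ![(2, 2)]
  invFun p := ![![.inl 0, .inr (.inl 1), .inr (.inr (.inl 2))],
    ![.inr (.inl 0), .inr (.inr (.inl 1)), .inr (.inr (.inr (.inl 1)))],
    ![.inr (.inr (.inl 0)), .inr (.inr (.inr (.inl 0))), .inr (.inr (.inr (.inr 0)))]] p.1 p.2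
  left_inv := by decide
  right_inv := by decide

theorem blockR_eq_reindex :
    blockR b0 B1 B2 B3 b4 = reindex gradedEquiv gradedEquiv
      (fromBlocks (of ![![b0]]) 0 0 (fromBlocks B1 0 0 (fromBlocks B2 0 0
        (fromBlocks B3 0 0 (of ![![b4]]))))) := by
  ext p q
  fin_cases p <;> fin_cases q <;> simp [blockR, f1, f2, f3, gradedEquiv]

theorem charpoly_blockR :
    (blockR b0 B1 B2 B3 b4).charpoly
      = (X - C b0) * B1.charpoly * B2.charpoly * B3.charpoly * (X - C b4) := by
  simp only [blockR_eq_reindex, charpoly_reindex, charpoly_fromBlocks_zero₂₁, charpoly_fin_one,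
    of_apply, cons_val', cons_val_fin_one, empty_val']
  ring

end BlockR

/-- The matrix of `sol522` with `c = b * u`; entry `((i, j), (k, l))` is `![…] i j k l`. -/
def sol522Table (b u x3 : ℂ) : Matrix (Fin 3 × Fin 3) (Fin 3 × Fin 3) ℂ :=
  of fun p q => ![
    ![![![1, 0, 0], ![0, 0, 0], ![0, 0, 0]],
      ![![0, 1, 0], ![0, 0, 0], ![0, 0, 0]],
      ![![0, 0, 0], ![0, 0, 0], ![-u, 0, 0]]],
    ![![![0, 0, 0], ![1, 0, 0], ![0, 0, 0]],
      ![![0, 0, x3], ![0, 1, 0], ![x3 * u, 0, 0]],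
      ![![0, 0, 0], ![0, 0, 0], ![0, b * u, 0]]],
    ![![![0, 0, -b ^ 2], ![0, 0, 0], ![1 - b ^ 2 * u, 0, 0]],
      ![![0, 0, 0], ![0, 0, b], ![0, 1 - b ^ 2 * u, 0]],
      ![![0, 0, 0], ![0, 0, 0], ![0, 0, -(b ^ 2 * u)]]]] p.1 p.2 q.1 q.2

theorem blockR_eq_sol522Table {b : ℂ} (u x3 : ℂ) (hb : b ≠ 0) :
    blockR 1 1 !![1 - b * (b * u), 0, -b ^ 2; x3 * (b * u) / b, 1, x3; -(b * u / b), 0, 0]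
      !![1 - b * (b * u), b; b * u, 0] (-(b * (b * u))) = sol522Table b u x3 := by
  ext p q
  fin_cases p <;> fin_cases q <;> simp [blockR, f1, f2, f3, sol522Table, mul_div_assoc, hb] <;> ring

set_option maxHeartbeats 0 in
theorem sol522Table_braid_apply (b u x3 : ℂ) (p q : Fin 3 × Fin 3 × Fin 3)
    (h : charge₃ p = charge₃ q) :
    (R1 (sol522Table b u x3) * R2 (sol522Table b u x3) * R1 (sol522Table b u x3)) p q
      = (R2 (sol522Table b u x3) * R1 (sol522Table b u x3) * R2 (sol522Table b u x3)) p q := by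
  rw [R1_mul_R2_mul_R1_apply, R2_mul_R1_mul_R2_apply]
  obtain ⟨i, j, k⟩ := p
  obtain ⟨l, m, n⟩ := q
  fin_cases i <;> fin_cases j <;> fin_cases k <;> fin_cases l <;> fin_cases m <;> fin_cases n <;>
    first
    | exact absurd h (by decide)
    | simp [sol522Table, Fin.sum_univ_three] <;> ring

theorem charpoly_sol522_charge2Block {b c : ℂ} (x3 : ℂ) (hb : b ≠ 0) :
    !![1 - b * c, 0, -b ^ 2; x3 * c / b, 1, x3; -(c / b), 0, 0].charpoly
      = (X - C 1) ^ 2 * (X + C (b * c)) := by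
  obtain ⟨u, rfl⟩ : ∃ u, c = b * u := ⟨c / b, (mul_div_cancel₀ c hb).symm⟩
  simp [charpoly_fin_three, det_fin_three, trace_fin_three, mul_div_assoc, hb]
  ring

/-- solution 5.2.2 satisfies the braid relation, with eigenvalue −bc of
multiplicity 3 and eigenvalue 1 of multiplicity 6. -/
theorem sol522 (b c x3 : ℂ) (hbc : b * c ≠ 0) :
    Braid (blockR 1 1
      !![1 - b * c, 0, -b ^ 2; x3 * c / b, 1, x3; -(c / b), 0, 0]
      !![1 - b * c, b; c, 0] (-(b * c))) ∧
    (blockR 1 1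
      !![1 - b * c, 0, -b ^ 2; x3 * c / b, 1, x3; -(c / b), 0, 0]
      !![1 - b * c, b; c, 0] (-(b * c))).charpoly
      = (X - C 1) ^ 6 * (X + C (b * c)) ^ 3 := by
  have hb : b ≠ 0 := left_ne_zero_of_mul hbc
  refine ⟨braid_of_apply_eq (blockR_isGradedBy _ _ _ _ _) ?_, ?_⟩
  · obtain ⟨u, rfl⟩ : ∃ u, c = b * u := ⟨c / b, (mul_div_cancel₀ c hb).symm⟩
    rw [blockR_eq_sol522Table u x3 hb]
    exact sol522Table_braid_apply b u x3
  · rw [charpoly_blockR, charpoly_one, charpoly_sol522_charge2Block x3 hb, charpoly_fin_two]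
    simp [trace_fin_two, det_fin_two]
    ring
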